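/- arXiv:2010.04623 — 14 statements merged into one kernel-verified Lean document; each statement's English description precedes it below -/
import Mathlib

section
/- Let f be a polymorphism of (1in3, D2+) of arity n with f(∅) = 0, and let X, Y ⊆ [n] be disjoint. Then: (a) if f(X) = 0 and f(Y) ∈ {0, 2}, then f(X ∪ Y) ∈ {0, 2}; (b) if f(X) = 1 and f(Y) ∈ {0, 1}, then f(X ∪ Y) = 1. -/
/-- `f` is a polymorphism of `(1in3, B)` where `B` has relation `R`:
for every partition of `[n]` into three pairwise disjoint blocks `X, Y, Z`,
the triple of values is in `R`. -/
def IsPolymorphism {n : ℕ} {B : Type*} (R : B → B → B → Prop) (f : Finset (Fin n) → B) : Prop :=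
  ∀ X Y Z : Finset (Fin n), Disjoint X Y → Disjoint X Z → Disjoint Y Z →
    X ∪ Y ∪ Z = Finset.univ → R (f X) (f Y) (f Z)

/-- The relation of `D2+`: all coordinate permutations of (0,0,1), (1,1,2), (0,1,2). -/
def relD2p (a b c : ℕ) : Prop :=
  ({a, b, c} : Multiset ℕ) = {0, 0, 1} ∨ ({a, b, c} : Multiset ℕ) = {1, 1, 2} ∨
    ({a, b, c} : Multiset ℕ) = {0, 1, 2}

lemma relD2p_mem {a b c : ℕ} (h : relD2p a b c) :
    (a = 0 ∨ a = 1 ∨ a = 2) ∧ (b = 0 ∨ b = 1 ∨ b = 2) ∧ (c = 0 ∨ c = 1 ∨ c = 2) := by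
  have ha : a ∈ ({a, b, c} : Multiset ℕ) := by simp
  have hb : b ∈ ({a, b, c} : Multiset ℕ) := by simp
  have hc : c ∈ ({a, b, c} : Multiset ℕ) := by simp
  rcases h with h | h | h <;> rw [h] at ha hb hc <;> simp at ha hb hc <;> tauto

lemma relD2p_cases {a b c : ℕ} (h : relD2p a b c) :
    (a = 0 ∧ b = 0 ∧ c = 1) ∨ (a = 0 ∧ b = 1 ∧ c = 0) ∨ (a = 1 ∧ b = 0 ∧ c = 0) ∨
    (a = 1 ∧ b = 1 ∧ c = 2) ∨ (a = 1 ∧ b = 2 ∧ c = 1) ∨ (a = 2 ∧ b = 1 ∧ c = 1) ∨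
    (a = 0 ∧ b = 1 ∧ c = 2) ∨ (a = 0 ∧ b = 2 ∧ c = 1) ∨ (a = 1 ∧ b = 0 ∧ c = 2) ∨
    (a = 1 ∧ b = 2 ∧ c = 0) ∨ (a = 2 ∧ b = 0 ∧ c = 1) ∨ (a = 2 ∧ b = 1 ∧ c = 0) := by
  obtain ⟨ha, hb, hc⟩ := relD2p_mem h
  rcases ha with rfl | rfl | rfl <;> rcases hb with rfl | rfl | rfl <;>
    rcases hc with rfl | rfl | rfl <;> (revert h; unfold relD2p; decide)

theorem stmt_2 (n : ℕ) (hn : 1 ≤ n) (f : Finset (Fin n) → ℕ) (hf : IsPolymorphism relD2p f)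
    (h0 : f ∅ = 0) (X Y : Finset (Fin n)) (hXY : Disjoint X Y) :
    (f X = 0 → (f Y = 0 ∨ f Y = 2) → (f (X ∪ Y) = 0 ∨ f (X ∪ Y) = 2)) ∧
    (f X = 1 → (f Y = 0 ∨ f Y = 1) → f (X ∪ Y) = 1) := by
  set C := (X ∪ Y)ᶜ with hC
  have hXC : Disjoint X C := disjoint_compl_right.mono_left Finset.subset_union_left
  have hYC : Disjoint Y C := disjoint_compl_right.mono_left Finset.subset_union_right
  have h1 : relD2p (f X) (f Y) (f C) :=
    hf X Y C hXY hXC hYC (Finset.union_compl _)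
  have h2 : relD2p (f (X ∪ Y)) (f C) (f ∅) := by
    apply hf (X ∪ Y) C ∅ disjoint_compl_right (Finset.disjoint_empty_right _)
      (Finset.disjoint_empty_right _)
    rw [Finset.union_empty]; exact Finset.union_compl _
  rw [h0] at h2
  have c1 := relD2p_cases h1
  have c2 := relD2p_cases h2
  constructor <;> intro hx hy <;> omega
end

section
/- Let f be a polymorphism of (1in3, D2+) of arity n with f(∅) = 1, and let X, Y ⊆ [n] be disjoint. Then: (c) if f(X) = f(Y) = 1, then f(X ∪ Y) ∈ {0, 1}; (d) if f(X) = f(Y) = 0, then f(X ∪ Y) = 2. -/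
set_option linter.unreachableTactic false
set_option linter.unusedTactic false

lemma rel112 (c : ℕ) (h : relD2p 1 1 c) : c = 2 := by
  have hc : c ∈ ({1, 1, c} : Multiset ℕ) := by simp
  rcases h with h | h | h <;> rw [h] at hc <;> simp at hc <;>
    first
      | (rcases hc with rfl | rfl | rfl <;> revert h <;> decide)
      | (rcases hc with rfl | rfl <;> revert h <;> decide)
      | (subst hc; revert h; decide)

lemma rel00c (c : ℕ) (h : relD2p 0 0 c) : c = 1 := by
  have hc : c ∈ ({0, 0, c} : Multiset ℕ) := by simp
  rcases h with h | h | h <;> rw [h] at hc <;> simp at hc <;>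
    first
      | (rcases hc with rfl | rfl | rfl <;> revert h <;> decide)
      | (rcases hc with rfl | rfl <;> revert h <;> decide)
      | (subst hc; revert h; decide)

lemma reld12 (d : ℕ) (h : relD2p d 1 2) : d = 0 ∨ d = 1 := by
  have hd : d ∈ ({d, 1, 2} : Multiset ℕ) := by simp
  rcases h with h | h | h <;> rw [h] at hd <;> simp at hd <;>
    first
      | (rcases hd with rfl | rfl | rfl <;> revert h <;> decide)
      | (rcases hd with rfl | rfl <;> revert h <;> decide)
      | (subst hd; revert h; decide)

lemma reld11 (d : ℕ) (h : relD2p d 1 1) : d = 2 := by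
  have hd : d ∈ ({d, 1, 1} : Multiset ℕ) := by simp
  rcases h with h | h | h <;> rw [h] at hd <;> simp at hd <;>
    first
      | (rcases hd with rfl | rfl | rfl <;> revert h <;> decide)
      | (rcases hd with rfl | rfl <;> revert h <;> decide)
      | (subst hd; revert h; decide)

theorem stmt_3 (n : ℕ) (hn : 1 ≤ n) (f : Finset (Fin n) → ℕ) (hf : IsPolymorphism relD2p f)
    (h1 : f ∅ = 1) (X Y : Finset (Fin n)) (hXY : Disjoint X Y) :
    (f X = 1 → f Y = 1 → (f (X ∪ Y) = 0 ∨ f (X ∪ Y) = 1)) ∧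
    (f X = 0 → f Y = 0 → f (X ∪ Y) = 2) := by
  set Z := (X ∪ Y)ᶜ with hZ
  have hXZ : Disjoint X Z :=
    Disjoint.mono_left Finset.subset_union_left disjoint_compl_right
  have hYZ : Disjoint Y Z :=
    Disjoint.mono_left Finset.subset_union_right disjoint_compl_right
  have huniv : X ∪ Y ∪ Z = Finset.univ := Finset.union_compl _
  have h3 : relD2p (f X) (f Y) (f Z) := hf X Y Z hXY hXZ hYZ huniv
  have h4 : relD2p (f (X ∪ Y)) (f ∅) (f Z) := by
    apply hf (X ∪ Y) ∅ Z (Finset.disjoint_empty_right _) disjoint_compl_right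
      (Finset.disjoint_empty_left _)
    simpa using huniv
  rw [h1] at h4
  constructor
  · intro hx hy
    rw [hx, hy] at h3
    have hc := rel112 _ h3
    rw [hc] at h4
    exact reld12 _ h4
  · intro hx hy
    rw [hx, hy] at h3
    have hc := rel00c _ h3
    rw [hc] at h4
    exact reld11 _ h4
end

section
/- Let f be a polymorphism of (1in3, D2+) of arity n with f(∅) = 1. Then there exists a 0-set or a 2-set of size at most 2; that is, there exists X ⊆ [n] with |X| ≤ 2 and f(X) ∈ {0, 2}. -/
/-- Any finite set can be split into two disjoint halves. -/
lemma exists_half_split {α : Type*} [DecidableEq α] (Y : Finset α) :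
    ∃ E F : Finset α, Disjoint E F ∧ E ∪ F = Y ∧ 2 * E.card ≤ Y.card ∧
      2 * F.card ≤ Y.card + 1 := by
  obtain ⟨E, hE, hEcard⟩ :=
    Finset.exists_subset_card_eq (Nat.div_le_self Y.card 2)
  refine ⟨E, Y \ E, Finset.disjoint_sdiff, Finset.union_sdiff_of_subset hE, ?_, ?_⟩
  · omega
  · have := Finset.card_sdiff_of_subset hE
    omega

theorem stmt_6 (n : ℕ) (hn : 1 ≤ n) (f : Finset (Fin n) → ℕ) (hf : IsPolymorphism relD2p f)
    (h1 : f ∅ = 1) :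
    ∃ X : Finset (Fin n), X.card ≤ 2 ∧ (f X = 0 ∨ f X = 2) := by
  classical
  by_contra hcon
  push_neg at hcon
  -- X ∪ Xᶜ = univ
  have hcu : ∀ X : Finset (Fin n), X ∪ Xᶜ = Finset.univ := by
    intro X
    ext x
    simp only [Finset.mem_union, Finset.mem_compl, Finset.mem_univ, iff_true]
    tauto
  have hucu : ∀ X : Finset (Fin n), X ∪ Xᶜ ∪ ∅ = Finset.univ := by
    intro X
    rw [Finset.union_empty]
    exact hcu X
  -- values are in {0,1,2}
  have hrange : ∀ X : Finset (Fin n), f X = 0 ∨ f X = 1 ∨ f X = 2 := by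
    intro X
    have h := hf X Xᶜ ∅ disjoint_compl_right (by simp) (by simp) (hucu X)
    rw [h1] at h
    have := relD2p_cases h
    omega
  have hsmall : ∀ X : Finset (Fin n), X.card ≤ 2 → f X = 1 := by
    intro X hX
    have h := hcon X hX
    have := hrange X
    omega
  have huniv : f (Finset.univ : Finset (Fin n)) = 2 := by
    have h := hf ∅ ∅ Finset.univ (by simp) (by simp) (by simp) (by simp)
    rw [h1] at h
    have := relD2p_cases h
    omega
  -- a minimum-size set `A₀` with value ≠ 1
  have hTne : (Finset.univ.filter (fun X : Finset (Fin n) => f X ≠ 1)).Nonempty :=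
    ⟨Finset.univ, by simp [huniv]⟩
  obtain ⟨A₀, hA₀T, hA₀min⟩ :=
    Finset.exists_min_image (Finset.univ.filter (fun X : Finset (Fin n) => f X ≠ 1))
      Finset.card hTne
  have hA₀1 : f A₀ ≠ 1 := by
    have h := hA₀T
    simp only [Finset.mem_filter, Finset.mem_univ, true_and] at h
    exact h
  have hlt1 : ∀ Y : Finset (Fin n), Y.card < A₀.card → f Y = 1 := by
    intro Y hY
    by_contra hY1
    have : A₀.card ≤ Y.card := hA₀min Y (by simp [hY1])
    omega
  have hm3 : 3 ≤ A₀.card := by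
    by_contra h
    exact hA₀1 (hsmall A₀ (by omega))
  have hcardle : ∀ X : Finset (Fin n), X.card ≤ n := by
    intro X
    have := Finset.card_le_univ X
    simpa using this
  -- every set whose complement has size ≤ 2·|A₀| - 2 has value 2
  have hbig : ∀ Y : Finset (Fin n), n + 2 ≤ Y.card + 2 * A₀.card → f Y = 2 := by
    intro Y hY
    obtain ⟨E, F, hEF, hEFU, hEc, hFc⟩ := exists_half_split Yᶜ
    have hYn := hcardle Y
    have hYc : Yᶜ.card = n - Y.card := by
      simp [Finset.card_compl]
    have hE1 : f E = 1 := hlt1 E (by omega)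
    have hF1 : f F = 1 := hlt1 F (by omega)
    have hEsub : E ⊆ Yᶜ := by rw [← hEFU]; exact Finset.subset_union_left
    have hFsub : F ⊆ Yᶜ := by rw [← hEFU]; exact Finset.subset_union_right
    have h := hf E F Y hEF (disjoint_compl_left.mono_left hEsub)
      (disjoint_compl_left.mono_left hFsub)
      (by rw [hEFU, Finset.union_comm]; exact hcu Y)
    rw [hE1, hF1] at h
    have := relD2p_cases h
    omega
  -- hence there is no set of value 2 of size ≤ 2·|A₀| - 2
  have h2small : ∀ D : Finset (Fin n), D.card + 2 ≤ 2 * A₀.card → f D ≠ 2 := by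
    intro D hD hD2
    have hDn := hcardle D
    have hDc : f Dᶜ = 2 := by
      apply hbig
      have : Dᶜ.card = n - D.card := by simp [Finset.card_compl]
      omega
    have h := hf D Dᶜ ∅ disjoint_compl_right (by simp) (by simp) (hucu D)
    rw [h1, hD2, hDc] at h
    have := relD2p_cases h
    omega
  have fA₀ : f A₀ = 0 := by
    have h2 := h2small A₀ (by omega)
    have := hrange A₀
    omega
  -- the complement of A₀ has value ≠ 1
  have hA₀c1 : f A₀ᶜ ≠ 1 := by
    have h := hf A₀ A₀ᶜ ∅ disjoint_compl_right (by simp) (by simp) (hucu A₀)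
    rw [h1, fA₀] at h
    have := relD2p_cases h
    omega
  -- a minimum-size subset W of A₀ᶜ with value ≠ 1
  have hSne : ((A₀ᶜ.powerset).filter (fun X : Finset (Fin n) => f X ≠ 1)).Nonempty :=
    ⟨A₀ᶜ, by simp [hA₀c1]⟩
  obtain ⟨W, hWS, hWmin⟩ :=
    Finset.exists_min_image ((A₀ᶜ.powerset).filter (fun X : Finset (Fin n) => f X ≠ 1))
      Finset.card hSne
  have hWsub : W ⊆ A₀ᶜ := by
    have h := hWS
    simp only [Finset.mem_filter, Finset.mem_powerset] at h
    exact h.1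
  have hW1 : f W ≠ 1 := by
    have h := hWS
    simp only [Finset.mem_filter, Finset.mem_powerset] at h
    exact h.2
  have hWne : W.Nonempty := by
    rcases W.eq_empty_or_nonempty with h | h
    · exact absurd (by rw [h]; exact h1) hW1
    · exact h
  obtain ⟨pt, hpt⟩ := hWne
  have hdisjAW : Disjoint A₀ W := disjoint_compl_right.mono_right hWsub
  -- f of the rest of the partition (A₀, W, ·) is 1
  have hR₁ : f (A₀ ∪ W)ᶜ = 1 := by
    have h := hf A₀ W (A₀ ∪ W)ᶜ hdisjAW
      (disjoint_compl_right.mono_left Finset.subset_union_left)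
      (disjoint_compl_right.mono_left Finset.subset_union_right)
      (hcu (A₀ ∪ W))
    rw [fA₀] at h
    have hW02 := hrange W
    have := relD2p_cases h
    omega
  -- by minimality, f (W.erase pt) = 1
  have hW'1 : f (W.erase pt) = 1 := by
    by_contra hW'
    have hsub : W.erase pt ⊆ A₀ᶜ := (Finset.erase_subset _ _).trans hWsub
    have hle : W.card ≤ (W.erase pt).card := by
      apply hWmin
      simp only [Finset.mem_filter, Finset.mem_powerset]
      exact ⟨hsub, hW'⟩
    have hec : (W.erase pt).card = W.card - 1 := Finset.card_erase_of_mem hpt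
    have hpos : 1 ≤ W.card := Finset.card_pos.mpr ⟨pt, hpt⟩
    omega
  have hptA : pt ∉ A₀ := by
    have h := hWsub hpt
    simpa using h
  -- the final partition ((A₀ ∪ W)ᶜ, W.erase pt, insert pt A₀) forces a small 2-set
  have hfX₃ : f (insert pt A₀) = 2 := by
    have hsub3 : insert pt A₀ ⊆ A₀ ∪ W :=
      Finset.insert_subset (Finset.mem_union_right _ hpt) Finset.subset_union_left
    have hd1 : Disjoint (A₀ ∪ W)ᶜ (W.erase pt) :=
      disjoint_compl_left.mono_right ((Finset.erase_subset _ _).trans Finset.subset_union_right)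
    have hd2 : Disjoint (A₀ ∪ W)ᶜ (insert pt A₀) := disjoint_compl_left.mono_right hsub3
    have hd3 : Disjoint (W.erase pt) (insert pt A₀) := by
      rw [Finset.disjoint_insert_right]
      exact ⟨Finset.notMem_erase _ _, hdisjAW.symm.mono_left (Finset.erase_subset _ _)⟩
    have hun : (A₀ ∪ W)ᶜ ∪ W.erase pt ∪ insert pt A₀ = Finset.univ := by
      ext x
      simp only [Finset.mem_union, Finset.mem_compl, Finset.mem_erase, Finset.mem_insert,
        Finset.mem_univ, iff_true]
      by_cases hx : x = pt
      · subst hx; tauto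
      · tauto
    have h := hf _ _ _ hd1 hd2 hd3 hun
    rw [hR₁, hW'1] at h
    have := relD2p_cases h
    omega
  have hX₃card : (insert pt A₀).card = A₀.card + 1 := Finset.card_insert_of_notMem hptA
  exact h2small (insert pt A₀) (by omega) hfX₃
end

section
/- Let f be a polymorphism of (1in3, T1) of arity n. Then f has no two disjoint 2-sets (there are no disjoint X, Y ⊆ [n] with f(X) = f(Y) = 2); in particular, f(∅) ∈ {0, 1}. -/
/-- The relation of `relT1`: all coordinate permutations of (0,0,1), (0,0,2), (1,1,2). -/
def relT1 (a b c : ℕ) : Prop :=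
  ({a, b, c} : Multiset ℕ) = {0, 0, 1} ∨ ({a, b, c} : Multiset ℕ) = {0, 0, 2} ∨
    ({a, b, c} : Multiset ℕ) = {1, 1, 2}

theorem stmt_7 (n : ℕ) (hn : 1 ≤ n) (f : Finset (Fin n) → ℕ) (hf : IsPolymorphism relT1 f) :
    (∀ X Y : Finset (Fin n), Disjoint X Y → ¬(f X = 2 ∧ f Y = 2)) ∧
      (f ∅ = 0 ∨ f ∅ = 1) := by
  have key : ∀ c : ℕ, ¬ relT1 2 2 c := by
    intro c h
    rcases h with h | h | h <;>
    · have := congrArg (Multiset.count 2) h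
      simp [Multiset.count_cons, Multiset.count_singleton] at this
  have mem : ∀ a b c : ℕ, relT1 a b c → a = 0 ∨ a = 1 ∨ a = 2 := by
    intro a b c h
    have ha : a ∈ ({a, b, c} : Multiset ℕ) := by simp
    rcases h with h | h | h <;> rw [h] at ha <;> simp at ha <;> omega
  constructor
  · rintro X Y hXY ⟨hX, hY⟩
    have hR := hf X Y ((X ∪ Y)ᶜ) hXY
      (disjoint_compl_right.mono_left Finset.subset_union_left)
      (disjoint_compl_right.mono_left Finset.subset_union_right)
      (Finset.union_compl _)
    rw [hX, hY] at hR
    exact key _ hR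
  · have hR := hf ∅ ∅ Finset.univ (by simp) (by simp) (by simp) (by simp)
    rcases mem _ _ _ hR with h | h | h
    · exact Or.inl h
    · exact Or.inr h
    · rw [h] at hR
      exact absurd hR (key _)
end

section
/- Let f be a polymorphism of (1in3, T1) of arity n, and let X, Y, Z ⊆ [n] with X and Y disjoint, Z ⊆ X ∪ Y, f(X) = 1 and f(Y) = 1. Then Z is not a 2-set, i.e., f(Z) ≠ 2. -/
lemma relT1_one_one {w : ℕ} (h : relT1 1 1 w) : w = 2 := by
  rcases h with h | h | h <;>
  · have h1 := congrArg (Multiset.count 1) h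
    have h2 := congrArg (Multiset.count 2) h
    simp [Multiset.count_cons, Multiset.count_singleton] at h1 h2
    try omega

lemma relT1_not_two_two {a b : ℕ} (h : relT1 a b 2) : a ≠ 2 := by
  intro ha; subst ha
  rcases h with h | h | h <;>
  · have h2 := congrArg (Multiset.count 2) h
    simp [Multiset.count_cons, Multiset.count_singleton] at h2
    try omega

theorem stmt_8 (n : ℕ) (hn : 1 ≤ n) (f : Finset (Fin n) → ℕ) (hf : IsPolymorphism relT1 f)
    (X Y Z : Finset (Fin n)) (hXY : Disjoint X Y) (hZ : Z ⊆ X ∪ Y)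
    (hX : f X = 1) (hY : f Y = 1) :
    f Z ≠ 2 := by
  set W : Finset (Fin n) := Finset.univ \ (X ∪ Y) with hW
  have hdW : Disjoint (X ∪ Y) W := Finset.disjoint_sdiff
  have hUW : (X ∪ Y) ∪ W = Finset.univ :=
    Finset.union_sdiff_of_subset (Finset.subset_univ _)
  have h1 : relT1 (f X) (f Y) (f W) := by
    apply hf X Y W hXY
    · exact hdW.mono_left Finset.subset_union_left
    · exact hdW.mono_left Finset.subset_union_right
    · rw [Finset.union_assoc]; rw [Finset.union_assoc] at hUW; exact hUW
  rw [hX, hY] at h1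
  have hfW : f W = 2 := relT1_one_one h1
  set C : Finset (Fin n) := (X ∪ Y) \ Z with hC
  have h2 : relT1 (f Z) (f C) (f W) := by
    apply hf Z C W Finset.disjoint_sdiff
    · exact hdW.mono_left hZ
    · exact hdW.mono_left (Finset.sdiff_subset)
    · show Z ∪ C ∪ W = Finset.univ
      rw [hC, Finset.union_sdiff_of_subset hZ]
      exact hUW
  rw [hfW] at h2
  exact relT1_not_two_two h2
end

section
/- Let f be a polymorphism of (1in3, T1) of arity n with f(∅) = 0. Then |E(f)| is odd, and for every X ⊆ [n], f(X) ∈ {1, 2} if and only if |X ∩ E(f)| is odd (equivalently, r(f(X)) = |X ∩ E(f)| mod 2, where r(0) = 0 and r(1) = r(2) = 1). -/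
/-- `E(f)`: the set of coordinates `x` whose singleton is a 1-set or a 2-set. -/
def Eset {n : ℕ} (f : Finset (Fin n) → ℕ) : Finset (Fin n) :=
  Finset.univ.filter (fun x => f {x} = 1 ∨ f {x} = 2)

lemma relT1_key (a b c : ℕ) (h : relT1 a b c) :
    (a = 0 ∨ a = 1 ∨ a = 2) ∧ ((a = 0) ↔ ¬((b = 0) ↔ (c = 0))) := by
  rcases h with h | h | h <;>
  · have ha : a ∈ ({a, b, c} : Multiset ℕ) := by simp
    have hb : b ∈ ({a, b, c} : Multiset ℕ) := by simp
    have hc : c ∈ ({a, b, c} : Multiset ℕ) := by simp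
    rw [h] at ha hb hc
    have hs := congrArg Multiset.sum h
    simp [Multiset.insert_eq_cons] at ha hb hc hs
    omega

theorem stmt_9 (n : ℕ) (hn : 1 ≤ n) (f : Finset (Fin n) → ℕ) (hf : IsPolymorphism relT1 f)
    (h0 : f ∅ = 0) :
    Odd (Eset f).card ∧
      ∀ X : Finset (Fin n), (f X = 1 ∨ f X = 2) ↔ Odd (X ∩ Eset f).card := by
  -- basic facts from the partition (X, Xᶜ, ∅)
  have hXc : ∀ X : Finset (Fin n),
      (f X = 0 ∨ f X = 1 ∨ f X = 2) ∧ (f X = 0 ↔ ¬ f Xᶜ = 0) := by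
    intro X
    have h := hf X Xᶜ ∅ disjoint_compl_right (Finset.disjoint_empty_right X)
      (Finset.disjoint_empty_right Xᶜ) (by simp [Finset.union_compl])
    have := relT1_key _ _ _ h
    rw [h0] at this
    constructor
    · exact this.1
    · rw [this.2]; tauto
  -- parity over insertion
  have hins : ∀ (x : Fin n) (X : Finset (Fin n)), x ∉ X →
      (f (insert x X) = 0 ↔ (f {x} = 0 ↔ f X = 0)) := by
    intro x X hx
    have hd1 : Disjoint ({x} : Finset (Fin n)) X := by
      simp [Finset.disjoint_singleton_left, hx]
    have hsub : ({x} : Finset (Fin n)) ⊆ insert x X := by simp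
    have hsub2 : X ⊆ insert x X := Finset.subset_insert x X
    have h := hf {x} X (insert x X)ᶜ hd1
      (disjoint_compl_right.mono_left hsub)
      (disjoint_compl_right.mono_left hsub2)
      (by rw [← Finset.insert_eq, Finset.union_compl])
    have hk := (relT1_key _ _ _ h).2
    have h2 := (hXc (insert x X)).2
    constructor
    · intro h3
      have : ¬ f (insert x X)ᶜ = 0 := h2.mp h3
      tauto
    · intro h3
      by_contra h4
      have : ¬ f (insert x X) = 0 → ¬ ¬ f (insert x X)ᶜ = 0 := by
        intro h5 h6
        exact h5 (h2.mpr h6)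
      tauto
  -- main claim by induction
  have key : ∀ X : Finset (Fin n), f X = 0 ↔ ¬ Odd (X ∩ Eset f).card := by
    intro X
    induction X using Finset.induction_on with
    | empty => simp [h0]
    | @insert x X hx ih =>
      have hxE : f {x} = 0 ↔ x ∉ Eset f := by
        have := (hXc {x}).1
        simp only [Eset, Finset.mem_filter, Finset.mem_univ, true_and]
        omega
      rw [hins x X hx, hxE, ih]
      by_cases hmem : x ∈ Eset f
      · have : insert x X ∩ Eset f = insert x (X ∩ Eset f) := by
          rw [Finset.insert_inter_of_mem hmem]
        rw [this, Finset.card_insert_of_notMem (by simp [hx])]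
        simp [hmem, Nat.odd_add_one, Nat.not_even_iff_odd]
      · have : insert x X ∩ Eset f = X ∩ Eset f := Finset.insert_inter_of_notMem hmem
        rw [this]
        simp [hmem]
  have hmain : ∀ X : Finset (Fin n), (f X = 1 ∨ f X = 2) ↔ Odd (X ∩ Eset f).card := by
    intro X
    have h1 := (hXc X).1
    have h2 := key X
    constructor
    · intro h3
      by_contra h4
      exact absurd (h2.mpr h4) (by omega)
    · intro h3
      have : ¬ f X = 0 := fun h5 => (h2.mp h5) h3
      omega
  refine ⟨?_, hmain⟩
  have huniv : f Finset.univ = 1 ∨ f Finset.univ = 2 := by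
    have h1 := (hXc ∅ᶜ).1
    have : ¬ f (∅ : Finset (Fin n))ᶜ = 0 := (hXc ∅).2.mp h0
    simp only [Finset.compl_empty] at this h1
    omega
  have := (hmain Finset.univ).mp huniv
  simpa using this
end

section
/- Let f be a polymorphism of (1in3, T1) of arity n such that f(∅) = 0 and f has no 2-set of size 2 (i.e., f(X) ≠ 2 for every X ⊆ [n] with |X| = 2). If X ⊆ [n] is a 1-set (f(X) = 1) and E(f) \ X is nonempty, then X ∪ I(f) is a 1-set, i.e., f(X ∪ I(f)) = 1. -/
/-!
Adding to a 1-set `S` a coordinate `x` with `f {x} = 0` yields a nonzero set. If it were a 2-set,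
then for a coordinate `e ∉ S ∪ {x}` of `E(f)` the partition `S ∪ {x}, {e}, rest` forces
`f {e} = 1` and `f rest = 1`; then `{x, e}` is a 1-set (it is nonzero and has size 2), and the
partition `S, {x, e}, rest` forces `f rest = 2`. Adding the coordinates of `I(f)` one at a time
proves the theorem.
-/

lemma relT1.cases {a b c : ℕ} (h : relT1 a b c) :
    (a = 0 ∧ b = 0 ∧ c = 1) ∨ (a = 0 ∧ b = 1 ∧ c = 0) ∨ (a = 1 ∧ b = 0 ∧ c = 0) ∨
    (a = 0 ∧ b = 0 ∧ c = 2) ∨ (a = 0 ∧ b = 2 ∧ c = 0) ∨ (a = 2 ∧ b = 0 ∧ c = 0) ∨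
    (a = 1 ∧ b = 1 ∧ c = 2) ∨ (a = 1 ∧ b = 2 ∧ c = 1) ∨
    (a = 2 ∧ b = 1 ∧ c = 1) := by
  unfold relT1 at h
  have hle : ∀ y ∈ ({a, b, c} : Multiset ℕ), y ≤ 2 := by
    rcases h with h | h | h <;> rw [h] <;> simp
  have ha : a ≤ 2 := hle a (by simp)
  have hb : b ≤ 2 := hle b (by simp)
  have hc : c ≤ 2 := hle c (by simp)
  interval_cases a <;> interval_cases b <;> interval_cases c <;>
    revert h <;> decide

namespace IsPolymorphism

variable {n : ℕ}

lemma rel_compl {B : Type*} {R : B → B → B → Prop} {f : Finset (Fin n) → B}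
    (hf : IsPolymorphism R f) (A : Finset (Fin n)) : R (f A) (f Aᶜ) (f ∅) :=
  hf A Aᶜ ∅ disjoint_compl_right (Finset.disjoint_empty_right _)
    (Finset.disjoint_empty_right _) (by simp)

lemma rel_union {B : Type*} {R : B → B → B → Prop} {f : Finset (Fin n) → B}
    (hf : IsPolymorphism R f) {A C : Finset (Fin n)} (hAC : Disjoint A C) :
    R (f A) (f C) (f (A ∪ C)ᶜ) :=
  hf A C _ hAC (disjoint_compl_right.mono_left Finset.subset_union_left)
    (disjoint_compl_right.mono_left Finset.subset_union_right) (Finset.union_compl _)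

variable {f : Finset (Fin n) → ℕ} (hf : IsPolymorphism relT1 f) (h0 : f ∅ = 0)
include hf h0

lemma apply_le_two (A : Finset (Fin n)) : f A ≤ 2 := by
  have := (h0 ▸ hf.rel_compl A).cases
  omega

lemma apply_ne_zero_of_compl {A : Finset (Fin n)} (hA : f Aᶜ = 0) : f A ≠ 0 := by
  have := (h0 ▸ hf.rel_compl Aᶜ).cases
  rw [compl_compl] at this
  omega

lemma apply_union_ne_zero {A C : Finset (Fin n)} (hAC : Disjoint A C) (hA : f A = 0)
    (hC : f C ≠ 0) : f (A ∪ C) ≠ 0 := by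
  have := (hf.rel_union hAC).cases
  exact hf.apply_ne_zero_of_compl h0 (by omega)

lemma apply_insert_eq_one (h2 : ∀ X : Finset (Fin n), X.card = 2 → f X ≠ 2)
    {S : Finset (Fin n)} {x e : Fin n} (hS : f S = 1) (hx : f {x} = 0) (hxS : x ∉ S)
    (he : f {e} ≠ 0) (heS : e ∉ S) (hex : e ≠ x) : f (insert x S) = 1 := by
  have hxS_ne_zero : f (insert x S) ≠ 0 := by
    rw [Finset.insert_eq]
    exact hf.apply_union_ne_zero h0 (by simpa using hxS) hx (by omega)
  by_contra hxS_one
  have hxS_two : f (insert x S) = 2 := by have := hf.apply_le_two h0 (insert x S); omega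
  have hcases_e := (hf.rel_union (A := insert x S) (C := {e}) (by simp [hex, heS])).cases
  have hxe_ne_zero : f {x, e} ≠ 0 := by
    rw [Finset.insert_eq]
    exact hf.apply_union_ne_zero h0 (by simpa using hex.symm) hx he
  have hxe_one : f {x, e} = 1 := by
    have := hf.apply_le_two h0 {x, e}
    have := h2 {x, e} (Finset.card_pair hex.symm)
    omega
  have hcases_xe := (hf.rel_union (A := S) (C := {x, e}) (by simp [hxS, heS])).cases
  have hsets : S ∪ {x, e} = insert x S ∪ {e} := by rw [Finset.union_insert, Finset.insert_union]
  rw [hsets] at hcases_xe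
  omega

lemma apply_union_eq_one (h2 : ∀ X : Finset (Fin n), X.card = 2 → f X ≠ 2)
    {S T : Finset (Fin n)} {e : Fin n} (hS : f S = 1) (hT : ∀ x ∈ T, f {x} = 0)
    (he : f {e} ≠ 0) (heS : e ∉ S) : f (S ∪ T) = 1 := by
  induction T using Finset.induction_on with
  | empty => simpa using hS
  | @insert x T _ ih =>
    have ih := ih fun y hy => hT y (Finset.mem_insert_of_mem hy)
    rw [Finset.union_insert]
    by_cases hx : x ∈ S ∪ T
    · rwa [Finset.insert_eq_of_mem hx]
    have heT : e ∉ T := fun h => he (hT e (Finset.mem_insert_of_mem h))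
    have hex : e ≠ x := by rintro rfl; exact he (hT e (Finset.mem_insert_self e T))
    exact hf.apply_insert_eq_one h0 h2 ih (hT x (Finset.mem_insert_self x T)) hx he
      (by simp [heS, heT]) hex

end IsPolymorphism

theorem stmt_10_general (n : ℕ) (f : Finset (Fin n) → ℕ) (hf : IsPolymorphism relT1 f)
    (h0 : f ∅ = 0) (h2 : ∀ X : Finset (Fin n), X.card = 2 → f X ≠ 2)
    (X : Finset (Fin n)) (hX : f X = 1) (hne : (Eset f \ X).Nonempty) :
    f (X ∪ (Eset f)ᶜ) = 1 := by
  obtain ⟨e, he⟩ := hne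
  rw [Finset.mem_sdiff, Eset, Finset.mem_filter] at he
  refine hf.apply_union_eq_one h0 h2 hX (fun x hx => ?_) (by omega) he.2
  have hx : ¬(f {x} = 1 ∨ f {x} = 2) := by simpa [Eset] using hx
  have := hf.apply_le_two h0 {x}
  omega

theorem stmt_10 (n : ℕ) (hn : 1 ≤ n) (f : Finset (Fin n) → ℕ) (hf : IsPolymorphism relT1 f)
    (h0 : f ∅ = 0) (h2 : ∀ X : Finset (Fin n), X.card = 2 → f X ≠ 2)
    (X : Finset (Fin n)) (hX : f X = 1) (hne : (Eset f \ X).Nonempty) :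
    f (X ∪ (Eset f)ᶜ) = 1 :=
  stmt_10_general n f hf h0 h2 X hX hne
end

section
/- Let f be a polymorphism of (1in3, T1) of arity n such that f(∅) = 0 and f has no singleton 2-set (f({x}) ≠ 2 for all x ∈ [n]). If X ⊆ E(f) is a 1-set (f(X) = 1), then every Y ⊆ E(f) with |Y| = |X| is a 1-set, i.e., f(Y) = 1. -/
lemma rel11 {r : ℕ} (h : relT1 1 1 r) : r = 2 := by
  rcases h with h | h | h
  · have := congrArg (Multiset.count 1) h
    simp [Multiset.count_cons, Multiset.count_singleton] at this <;> omega
  · have := congrArg (Multiset.count 1) h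
    simp [Multiset.count_cons, Multiset.count_singleton] at this <;> omega
  · have := congrArg (Multiset.count 2) h
    simp [Multiset.count_cons, Multiset.count_singleton] at this <;> omega

lemma rel12 {r : ℕ} (h : relT1 r 1 2) : r = 1 := by
  rcases h with h | h | h
  · have := congrArg (Multiset.count 2) h
    simp [Multiset.count_cons, Multiset.count_singleton] at this <;> omega
  · have := congrArg (Multiset.count 1) h
    simp [Multiset.count_cons, Multiset.count_singleton] at this <;> omega
  · have := congrArg (Multiset.count 1) h
    simp [Multiset.count_cons, Multiset.count_singleton] at this
    split at this <;> omega

lemma swap_lemma {n : ℕ} {f : Finset (Fin n) → ℕ} (hf : IsPolymorphism relT1 f)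
    (h2 : ∀ x : Fin n, f {x} ≠ 2) {X : Finset (Fin n)} (hXE : X ⊆ Eset f) (hX : f X = 1)
    {a b : Fin n} (ha : a ∈ X) (hbE : b ∈ Eset f) (hb : b ∉ X) :
    f (insert b (X.erase a)) = 1 := by
  have hEone : ∀ x ∈ Eset f, f {x} = 1 := by
    intro x hx
    simp only [Eset, Finset.mem_filter] at hx
    rcases hx.2 with h | h
    · exact h
    · exact absurd h (h2 x)
  have hb1 : f {b} = 1 := hEone b hbE
  have ha1 : f {a} = 1 := hEone a (hXE ha)
  -- Step 1: f ((X ∪ {b})ᶜ) = 2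
  set C : Finset (Fin n) := (X ∪ {b})ᶜ with hC
  have hd1 : Disjoint X {b} := by simp [Finset.disjoint_singleton_right, hb]
  have hd2 : Disjoint X C := disjoint_compl_right.mono_left le_sup_left
  have hd3 : Disjoint {b} C := disjoint_compl_right.mono_left le_sup_right
  have hu1 : X ∪ {b} ∪ C = Finset.univ := Finset.union_compl _
  have hC2 : f C = 2 := by
    have := hf X {b} C hd1 hd2 hd3 hu1
    rw [hX, hb1] at this
    exact rel11 this
  -- Step 2
  set Y : Finset (Fin n) := insert b (X.erase a) with hY
  have haY : a ∉ Y := by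
    simp only [hY, Finset.mem_insert, Finset.mem_erase]
    rintro (rfl | ⟨h, _⟩) <;> simp_all
  have hYa : Y ∪ {a} = X ∪ {b} := by
    ext x
    simp only [hY, Finset.mem_union, Finset.mem_insert, Finset.mem_erase,
      Finset.mem_singleton]
    by_cases hxa : x = a <;> simp [hxa, ha] <;> tauto
  have hd4 : Disjoint Y {a} := by simp [Finset.disjoint_singleton_right, haY]
  have hd5 : Disjoint Y C := by
    refine disjoint_compl_right.mono_left ?_
    rw [← hYa]; exact le_sup_left
  have hd6 : Disjoint ({a} : Finset (Fin n)) C := by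
    refine disjoint_compl_right.mono_left ?_
    rw [← hYa]; exact le_sup_right
  have hu2 : Y ∪ {a} ∪ C = Finset.univ := by rw [hYa]; exact Finset.union_compl _
  have := hf Y {a} C hd4 hd5 hd6 hu2
  rw [ha1, hC2] at this
  exact rel12 this

theorem stmt_11 (n : ℕ) (hn : 1 ≤ n) (f : Finset (Fin n) → ℕ) (hf : IsPolymorphism relT1 f)
    (h0 : f ∅ = 0) (h2 : ∀ x : Fin n, f {x} ≠ 2)
    (X : Finset (Fin n)) (hXE : X ⊆ Eset f) (hX : f X = 1) :
    ∀ Y : Finset (Fin n), Y ⊆ Eset f → Y.card = X.card → f Y = 1 := by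
  have key : ∀ k : ℕ, ∀ X Y : Finset (Fin n), X ⊆ Eset f → Y ⊆ Eset f → f X = 1 →
      Y.card = X.card → (X \ Y).card = k → f Y = 1 := by
    intro k
    induction k with
    | zero =>
      intro X Y hXE hYE hX hcard hk
      have hsub : X ⊆ Y := by
        rw [Finset.card_eq_zero, Finset.sdiff_eq_empty_iff_subset] at hk
        exact hk
      have : X = Y := Finset.eq_of_subset_of_card_le hsub (le_of_eq hcard)
      rw [← this]; exact hX
    | succ k ih =>
      intro X Y hXE hYE hX hcard hk
      have hXY : (X \ Y).Nonempty := by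
        rw [← Finset.card_pos, hk]; omega
      obtain ⟨a, haXY⟩ := hXY
      have hYX : (Y \ X).Nonempty := by
        rw [← Finset.card_pos]
        have h1 := Finset.card_sdiff_add_card_inter X Y
        have h2 := Finset.card_sdiff_add_card_inter Y X
        rw [Finset.inter_comm] at h2
        have : (X \ Y).card = (Y \ X).card := by omega
        omega
      obtain ⟨b, hbYX⟩ := hYX
      rw [Finset.mem_sdiff] at haXY hbYX
      obtain ⟨haX, haY⟩ := haXY
      obtain ⟨hbY, hbX⟩ := hbYX
      set X' : Finset (Fin n) := insert b (X.erase a) with hX'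
      have hX'1 : f X' = 1 := swap_lemma hf h2 hXE hX haX (hYE hbY) hbX
      have hX'E : X' ⊆ Eset f := by
        intro x hx
        simp only [hX', Finset.mem_insert, Finset.mem_erase] at hx
        rcases hx with rfl | ⟨_, hx⟩
        · exact hYE hbY
        · exact hXE hx
      have hcard' : Y.card = X'.card := by
        rw [hX', Finset.card_insert_of_notMem (by simp [hbX]),
          Finset.card_erase_of_mem haX, hcard]
        have : 1 ≤ X.card := Finset.card_pos.mpr ⟨a, haX⟩
        omega
      have hk' : (X' \ Y).card = k := by
        have hset : X' \ Y = (X \ Y).erase a := by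
          ext x
          simp only [hX', Finset.mem_sdiff, Finset.mem_insert, Finset.mem_erase]
          constructor
          · rintro ⟨rfl | ⟨hxa, hxX⟩, hxY⟩
            · exact absurd hbY hxY
            · exact ⟨hxa, hxX, hxY⟩
          · rintro ⟨hxa, hxX, hxY⟩
            exact ⟨Or.inr ⟨hxa, hxX⟩, hxY⟩
        rw [hset, Finset.card_erase_of_mem (by simp [haX, haY]), hk]
        omega
      exact ih X' Y hX'E hYE hX'1 hcard' hk'
  intro Y hYE hcard
  exact key (X \ Y).card X Y hXE hYE hX hcard rfl
end

section
/- Let f be a polymorphism of (1in3, T1) of arity n such that f(∅) = 0 and f has no 2-set of size at most 2 (i.e., f(X) ≠ 2 for every X ⊆ [n] with |X| ≤ 2). Then |E(f)| ≤ 5. -/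
/-
Singletons of `E` are 1-sets and the other singletons 0-sets; a pair inside `E` is a 0-set whose
complement is a 2-set, and a pair `{y, z}` with `y ∈ E`, `z ∉ E` is a 1-set. A triple inside `E`
is a 1-set: were it a 2-set, exchanging its points one at a time for points of `E` outside it
keeps it a 2-set (here `|E| ≥ 6` is used), and two disjoint 2-sets cannot occur. Since
`f A = f (insert y B) = f {y} = 1` forces `f (A ∪ B) = 1`, induction then shows that every set
`X` missing a point of `E` with `|X ∩ E|` odd is a 1-set. For `|E|` even, `X = {x}ᶜ` contradicts
`f {x}ᶜ = 0`; for `|E|` odd, `X = {x, x'}ᶜ` contradicts `f {x, x'}ᶜ = 2`.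
-/

open Finset

lemma relT1_elim {a b c : ℕ} (h : relT1 a b c) :
    (a + b + c = 1 ∧ a ≤ 1 ∧ b ≤ 1 ∧ c ≤ 1) ∨
    (a + b + c = 2 ∧ a ≠ 1 ∧ b ≠ 1 ∧ c ≠ 1) ∨
    (a + b + c = 4 ∧ 1 ≤ a ∧ 1 ≤ b ∧ 1 ≤ c ∧ a ≤ 2 ∧ b ≤ 2 ∧ c ≤ 2) := by
  have ha : a ∈ ({a, b, c} : Multiset ℕ) := by simp
  have hb : b ∈ ({a, b, c} : Multiset ℕ) := by simp
  have hc : c ∈ ({a, b, c} : Multiset ℕ) := by simp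
  rcases h with h | h | h <;>
    rw [h] at ha hb hc <;> have hs := congrArg Multiset.sum h <;>
    simp at ha hb hc hs <;> omega

section

variable {n : ℕ} {f : Finset (Fin n) → ℕ}

lemma apply_singleton_of_mem_Eset (h2 : ∀ X : Finset (Fin n), X.card ≤ 2 → f X ≠ 2)
    {x : Fin n} (hx : x ∈ Eset f) : f {x} = 1 := by
  simp only [Eset, mem_filter, mem_univ, true_and] at hx
  exact hx.resolve_right (h2 _ (by simp))

namespace IsPolymorphism

lemma rel_compl_s12 (hf : IsPolymorphism relT1 f) {X Y : Finset (Fin n)} (h : Disjoint X Y) :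
    relT1 (f X) (f Y) (f (X ∪ Y)ᶜ) :=
  hf X Y (X ∪ Y)ᶜ h (disjoint_compl_right.mono_left subset_union_left)
    (disjoint_compl_right.mono_left subset_union_right) (union_compl _)

lemma rel_self_compl (hf : IsPolymorphism relT1 f) (h0 : f ∅ = 0) (X : Finset (Fin n)) :
    relT1 (f X) 0 (f Xᶜ) := by
  simpa [h0] using hf.rel_compl_s12 (disjoint_empty_right X)

lemma not_disjoint_of_eq_two (hf : IsPolymorphism relT1 f) {X Y : Finset (Fin n)}
    (hX : f X = 2) (hY : f Y = 2) : ¬ Disjoint X Y := fun h => by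
  have := relT1_elim (hf.rel_compl_s12 h)
  omega

lemma apply_union_eq_one_s12 (hf : IsPolymorphism relT1 f) {A B : Finset (Fin n)} {y : Fin n}
    (hAB : Disjoint A B) (hyA : y ∉ A) (hyB : y ∉ B)
    (hA : f A = 1) (hB : f (insert y B) = 1) (hy : f {y} = 1) : f (A ∪ B) = 1 := by
  have h₁ := hf.rel_compl_s12 (X := A) (Y := insert y B) (by simp [hyA, hAB])
  have h₂ := hf.rel_compl_s12 (X := A ∪ B) (Y := {y}) (by simp [hyA, hyB])
  rw [union_singleton, ← union_insert] at h₂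
  have := relT1_elim h₁
  have := relT1_elim h₂
  omega

lemma apply_insert_eq_two_of_swap (hf : IsPolymorphism relT1 f) {B : Finset (Fin n)}
    {a y : Fin n} (hay : a ≠ y) (haB : a ∉ B) (hyB : y ∉ B) (ha : f {a} = 1) (hy : f {y} = 1)
    (h : f (insert a B) = 2) : f (insert y B) = 2 := by
  have h₁ := hf.rel_compl_s12 (X := insert a B) (Y := {y}) (by simp [hay.symm, hyB])
  have h₂ := hf.rel_compl_s12 (X := insert y B) (Y := {a}) (by simp [hay, haB])
  rw [union_singleton, insert_comm] at h₂
  rw [union_singleton] at h₁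
  have := relT1_elim h₁
  have := relT1_elim h₂
  omega

lemma apply_singleton_of_notMem_Eset (hf : IsPolymorphism relT1 f) (h0 : f ∅ = 0)
    {z : Fin n} (hz : z ∉ Eset f) : f {z} = 0 := by
  simp only [Eset, mem_filter, mem_univ, true_and, not_or] at hz
  have := relT1_elim (hf.rel_self_compl h0 {z})
  omega

variable (hf : IsPolymorphism relT1 f) (h0 : f ∅ = 0)
  (h2 : ∀ X : Finset (Fin n), X.card ≤ 2 → f X ≠ 2)
include hf h2

lemma apply_compl_pair_of_mem_Eset {x y : Fin n} (hx : x ∈ Eset f) (hy : y ∈ Eset f)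
    (hxy : x ≠ y) : f {x, y}ᶜ = 2 := by
  have h := hf.rel_compl_s12 (disjoint_singleton.2 hxy)
  rw [← insert_eq, apply_singleton_of_mem_Eset h2 hx, apply_singleton_of_mem_Eset h2 hy] at h
  have := relT1_elim h
  omega

include h0

lemma apply_pair_of_mem_Eset {x y : Fin n} (hx : x ∈ Eset f) (hy : y ∈ Eset f)
    (hxy : x ≠ y) : f {x, y} = 0 := by
  have h := hf.rel_self_compl h0 {x, y}
  rw [apply_compl_pair_of_mem_Eset hf h2 hx hy hxy] at h
  have := relT1_elim h
  omega

lemma apply_pair_of_mem_Eset_of_notMem {y z : Fin n} (hy : y ∈ Eset f) (hz : z ∉ Eset f) :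
    f {y, z} = 1 := by
  have hyz : y ≠ z := ne_of_mem_of_not_mem hy hz
  have h := hf.rel_compl_s12 (disjoint_singleton.2 hyz)
  rw [← insert_eq, apply_singleton_of_mem_Eset h2 hy,
    hf.apply_singleton_of_notMem_Eset h0 hz] at h
  have h' := hf.rel_self_compl h0 {y, z}
  have := h2 {y, z} card_le_two
  have := relT1_elim h
  have := relT1_elim h'
  omega

lemma apply_triple_of_mem_Eset (hE : 6 ≤ (Eset f).card) {a b c : Fin n} (ha : a ∈ Eset f)
    (hb : b ∈ Eset f) (hc : c ∈ Eset f) (hab : a ≠ b) (hac : a ≠ c) (hbc : b ≠ c) :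
    f {a, b, c} = 1 := by
  have hcompl : f {a, b, c}ᶜ = 0 := by
    have h := hf.rel_compl_s12 (X := {a, b}) (Y := {c}) (by simp [hac.symm, hbc.symm])
    rw [union_singleton, insert_comm c, pair_comm c, apply_pair_of_mem_Eset hf h0 h2 ha hb hab,
      apply_singleton_of_mem_Eset h2 hc] at h
    have := relT1_elim h
    omega
  have h := relT1_elim (hf.rel_self_compl h0 {a, b, c})
  rw [hcompl] at h
  by_contra hne
  have htwo : f {a, b, c} = 2 := by omega
  have hsub : {a, b, c} ⊆ Eset f := by simp [insert_subset_iff, ha, hb, hc]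
  obtain ⟨Y, hY, hY3⟩ := exists_subset_card_eq (s := Eset f \ {a, b, c}) (n := 3) (by
    rw [card_sdiff_of_subset hsub, card_eq_three.2 ⟨a, b, c, hab, hac, hbc, rfl⟩]
    omega)
  obtain ⟨y₁, y₂, y₃, h₁₂, h₁₃, h₂₃, rfl⟩ := card_eq_three.1 hY3
  simp only [insert_subset_iff, singleton_subset_iff, mem_sdiff, mem_insert, mem_singleton,
    not_or] at hY
  obtain ⟨⟨hy₁, hy₁a, hy₁b, hy₁c⟩, ⟨hy₂, hy₂a, hy₂b, hy₂c⟩, ⟨hy₃, hy₃a, hy₃b, hy₃c⟩⟩ :=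
    hY
  have one := @apply_singleton_of_mem_Eset n f h2
  have s₁ : f {y₁, b, c} = 2 :=
    hf.apply_insert_eq_two_of_swap (Ne.symm hy₁a) (by simp [hab, hac]) (by simp [hy₁b, hy₁c])
      (one ha) (one hy₁) htwo
  rw [insert_comm] at s₁
  have s₂ : f {y₂, y₁, c} = 2 :=
    hf.apply_insert_eq_two_of_swap (Ne.symm hy₂b) (by simp [Ne.symm hy₁b, hbc])
      (by simp [Ne.symm h₁₂, hy₂c]) (one hb) (one hy₂) s₁
  rw [pair_comm, insert_comm] at s₂
  have s₃ : f {y₃, y₂, y₁} = 2 :=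
    hf.apply_insert_eq_two_of_swap (Ne.symm hy₃c) (by simp [Ne.symm hy₂c, Ne.symm hy₁c])
      (by simp [Ne.symm h₂₃, Ne.symm h₁₃]) (one hc) (one hy₃) s₂
  exact hf.not_disjoint_of_eq_two htwo s₃ (by
    simp [hy₁a, hy₂a, hy₃a, hy₁b, hy₂b, hy₃b, hy₁c, hy₂c, hy₃c])

lemma apply_eq_one_of_odd_card_inter_Eset (hE : 6 ≤ (Eset f).card) {y : Fin n}
    (hy : y ∈ Eset f) (X : Finset (Fin n)) (hyX : y ∉ X) (hodd : Odd (X ∩ Eset f).card) :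
    f X = 1 := by
  induction X using Finset.strongInduction with
  | H X ih =>
  have one := @apply_singleton_of_mem_Eset n f h2
  by_cases hXE : X ⊆ Eset f
  · rw [inter_eq_left.2 hXE] at hodd
    obtain ⟨k, hk⟩ := hodd
    obtain rfl | rfl | hk₂ := (by omega : k = 0 ∨ k = 1 ∨ 2 ≤ k)
    · obtain ⟨x, rfl⟩ := card_eq_one.1 hk
      exact one (hXE (mem_singleton_self x))
    · obtain ⟨a, b, c, hab, hac, hbc, rfl⟩ := card_eq_three.1 hk
      simp only [insert_subset_iff, singleton_subset_iff] at hXE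
      exact apply_triple_of_mem_Eset hf h0 h2 hE hXE.1 hXE.2.1 hXE.2.2 hab hac hbc
    · obtain ⟨s₁, hs₁, s₂, hs₂, hs⟩ := one_lt_card.1 (by omega : 1 < X.card)
      have hsX : {s₁, s₂} ⊆ X := by simp [insert_subset_iff, hs₁, hs₂]
      have hys₁ : y ≠ s₁ := (ne_of_mem_of_not_mem hs₁ hyX).symm
      have hys₂ : y ≠ s₂ := (ne_of_mem_of_not_mem hs₂ hyX).symm
      have hrest : f (X \ {s₁, s₂}) = 1 := by
        refine ih _ (sdiff_ssubset hsX (by simp)) (fun h => hyX (mem_sdiff.1 h).1) ?_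
        rw [inter_eq_left.2 (sdiff_subset.trans hXE), card_sdiff_of_subset hsX, card_pair hs, hk]
        exact ⟨k - 1, by omega⟩
      have htriple : f {y, s₁, s₂} = 1 :=
        apply_triple_of_mem_Eset hf h0 h2 hE hy (hXE hs₁) (hXE hs₂) hys₁ hys₂ hs
      simpa [sdiff_union_of_subset hsX] using
        hf.apply_union_eq_one_s12 sdiff_disjoint (fun h => hyX (mem_sdiff.1 h).1)
          (by simp [hys₁, hys₂]) hrest htriple (one hy)
  · obtain ⟨z, hzX, hzE⟩ := not_subset.1 hXE
    have hrest : f (X.erase z) = 1 := by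
      refine ih _ (erase_ssubset hzX) (fun h => hyX (mem_of_mem_erase h)) ?_
      rwa [erase_inter, erase_eq_of_notMem (fun h => hzE (mem_inter.1 h).2)]
    have hyz : y ∉ ({z} : Finset (Fin n)) := by simp [ne_of_mem_of_not_mem hy hzE]
    simpa [insert_erase hzX] using
      hf.apply_union_eq_one_s12 (disjoint_singleton_right.2 (notMem_erase z X))
        (fun h => hyX (mem_of_mem_erase h)) hyz hrest
        (apply_pair_of_mem_Eset_of_notMem hf h0 h2 hy hzE) (one hy)

end IsPolymorphism

end

theorem stmt_12_general (n : ℕ) (f : Finset (Fin n) → ℕ) (hf : IsPolymorphism relT1 f)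
    (h0 : f ∅ = 0) (h2 : ∀ X : Finset (Fin n), X.card ≤ 2 → f X ≠ 2) :
    (Eset f).card ≤ 5 := by
  by_contra! hE
  obtain ⟨x, hx⟩ : (Eset f).Nonempty := card_pos.1 (by omega)
  have hcompl (S : Finset (Fin n)) (hS : S ⊆ Eset f) :
      (Sᶜ ∩ Eset f).card = (Eset f).card - S.card := by
    rw [inter_comm, ← sdiff_eq_inter_compl, card_sdiff_of_subset hS]
  rcases Nat.even_or_odd (Eset f).card with ⟨k, hk⟩ | ⟨k, hk⟩
  · have h := hf.apply_eq_one_of_odd_card_inter_Eset h0 h2 hE hx {x}ᶜ (by simp)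
      ⟨k - 1, by rw [hcompl _ (by simpa), card_singleton]; omega⟩
    have := relT1_elim (hf.rel_self_compl h0 {x})
    rw [apply_singleton_of_mem_Eset h2 hx, h] at this
    omega
  · obtain ⟨x', hx', hxx'⟩ := exists_mem_ne (s := Eset f) (by omega) x
    have h := hf.apply_eq_one_of_odd_card_inter_Eset h0 h2 hE hx {x', x}ᶜ (by simp)
      ⟨k - 1, by rw [hcompl _ (by simp [insert_subset_iff, hx, hx']), card_pair hxx']; omega⟩
    have := hf.apply_compl_pair_of_mem_Eset h2 hx' hx hxx'
    omega

theorem stmt_12 (n : ℕ) (hn : 1 ≤ n) (f : Finset (Fin n) → ℕ) (hf : IsPolymorphism relT1 f)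
    (h0 : f ∅ = 0) (h2 : ∀ X : Finset (Fin n), X.card ≤ 2 → f X ≠ 2) :
    (Eset f).card ≤ 5 :=
  stmt_12_general n f hf h0 h2
end

section
/- Let f be a polymorphism of (1in3, T1) of arity n with f(∅) = 1. Then f has a 2-set of size at most 2; that is, there exists X ⊆ [n] with |X| ≤ 2 and f(X) = 2. -/
instance (a b c : ℕ) : Decidable (relT1 a b c) :=
  inferInstanceAs (Decidable (_ ∨ _ ∨ _))

lemma relT1.le_two {a b c : ℕ} (h : relT1 a b c) : a ≤ 2 ∧ b ≤ 2 ∧ c ≤ 2 := by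
  have hmem : ∀ x ∈ ({a, b, c} : Multiset ℕ), x ≤ 2 := by
    rcases h with h | h | h <;> rw [h] <;> simp
  exact ⟨hmem a (by simp), hmem b (by simp), hmem c (by simp)⟩

lemma relT1_one_iff {a b : ℕ} :
    relT1 a b 1 ↔ a = 0 ∧ b = 0 ∨ a = 1 ∧ b = 2 ∨ a = 2 ∧ b = 1 := by
  constructor
  · intro h
    obtain ⟨ha, hb, -⟩ := h.le_two
    interval_cases a <;> interval_cases b <;> revert h <;> decide
  · rintro (⟨rfl, rfl⟩ | ⟨rfl, rfl⟩ | ⟨rfl, rfl⟩) <;> decide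

lemma relT1.eq_two_of_one_one {c : ℕ} (h : relT1 1 1 c) : c = 2 := by
  obtain ⟨-, -, hc⟩ := h.le_two
  interval_cases c <;> revert h <;> decide

lemma not_relT1_zero_zero_zero : ¬ relT1 0 0 0 := by decide

namespace IsPolymorphism

variable {n : ℕ}

section

variable {B : Type*} {R : B → B → B → Prop} {f : Finset (Fin n) → B}

lemma apply_sdiff_compl (hf : IsPolymorphism R f) {X Y : Finset (Fin n)} (hYX : Y ⊆ X) :
    R (f Y) (f (X \ Y)) (f Xᶜ) :=
  hf Y (X \ Y) Xᶜ disjoint_sdiff_self_right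
    (Finset.disjoint_of_subset_left hYX disjoint_compl_right)
    (Finset.disjoint_of_subset_left Finset.sdiff_subset disjoint_compl_right)
    (by rw [Finset.union_sdiff_of_subset hYX, Finset.union_compl])

lemma apply_compl (hf : IsPolymorphism R f) (A : Finset (Fin n)) : R (f A) (f Aᶜ) (f ∅) := by
  simpa [Finset.compl_eq_univ_sdiff] using hf.apply_sdiff_compl (Finset.subset_univ A)

lemma apply_empty_empty_univ (hf : IsPolymorphism R f) : R (f ∅) (f ∅) (f Finset.univ) := by
  simpa using hf.apply_sdiff_compl (subset_refl (∅ : Finset (Fin n)))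

end

section relT1

variable {f : Finset (Fin n) → ℕ}

lemma relT1_apply_univ (hf : IsPolymorphism relT1 f) (h1 : f ∅ = 1) : f Finset.univ = 2 :=
  (h1 ▸ hf.apply_empty_empty_univ).eq_two_of_one_one

lemma relT1_apply_compl_of_eq_two (hf : IsPolymorphism relT1 f) (h1 : f ∅ = 1)
    {X : Finset (Fin n)} (hX : f X = 2) : f Xᶜ = 1 := by
  have := relT1_one_iff.1 (h1 ▸ hX ▸ hf.apply_compl X)
  omega

lemma relT1_apply_compl_of_eq_zero (hf : IsPolymorphism relT1 f) (h1 : f ∅ = 1)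
    {X : Finset (Fin n)} (hX : f X = 0) : f Xᶜ = 0 := by
  have := relT1_one_iff.1 (h1 ▸ hX ▸ hf.apply_compl X)
  omega

lemma relT1_split_of_eq_two (hf : IsPolymorphism relT1 f) (h1 : f ∅ = 1)
    {X Y : Finset (Fin n)} (hX : f X = 2) (hYX : Y ⊆ X) :
    f Y = 2 ∨ f (X \ Y) = 2 ∨ f Y = 0 := by
  have := relT1_one_iff.1 (hf.relT1_apply_compl_of_eq_two h1 hX ▸ hf.apply_sdiff_compl hYX)
  omega

lemma relT1_false_of_apply_pair_eq_zero (hf : IsPolymorphism relT1 f) (h1 : f ∅ = 1)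
    {x y : Fin n} (hxy : x ≠ y) (hx : f {x} = 0) (hy : f {y} = 0) (hxy0 : f {x, y} = 0) :
    False := by
  have hsplit := hf.apply_sdiff_compl (Finset.singleton_subset_iff.2 (Finset.mem_insert_self x {y}))
  rw [Finset.insert_sdiff_of_mem _ (Finset.mem_singleton_self x),
    Finset.sdiff_eq_self_of_disjoint (Finset.disjoint_singleton.2 hxy.symm), hx, hy,
    hf.relT1_apply_compl_of_eq_zero h1 hxy0] at hsplit
  exact not_relT1_zero_zero_zero hsplit

lemma relT1_exists_subset_card_le_two (hf : IsPolymorphism relT1 f) (h1 : f ∅ = 1)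
    (X : Finset (Fin n)) (hX : f X = 2) : ∃ Y ⊆ X, Y.card ≤ 2 ∧ f Y = 2 := by
  induction X using Finset.strongInduction with
  | H X ih =>
  by_cases hcard : X.card ≤ 2
  · exact ⟨X, subset_refl X, hcard, hX⟩
  have hzero : ∀ Y ⊆ X, Y.card ≤ 2 → Y.Nonempty →
      (∃ Y ⊆ X, Y.card ≤ 2 ∧ f Y = 2) ∨ f Y = 0 := by
    intro Y hYX hYcard hne
    rcases hf.relT1_split_of_eq_two h1 hX hYX with h2 | h2 | h0
    · exact .inl ⟨Y, hYX, hYcard, h2⟩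
    · obtain ⟨Z, hZ, hZcard, hZ2⟩ := ih (X \ Y) (Finset.sdiff_ssubset hYX hne) h2
      exact .inl ⟨Z, hZ.trans Finset.sdiff_subset, hZcard, hZ2⟩
    · exact .inr h0
  obtain ⟨x, hx, y, hy, hxy⟩ := Finset.one_lt_card.1 (by omega : 1 < X.card)
  have hpair : {x, y} ⊆ X := Finset.insert_subset hx (Finset.singleton_subset_iff.2 hy)
  rcases hzero {x} (Finset.singleton_subset_iff.2 hx) (by simp) (by simp) with h | hx0
  · exact h
  rcases hzero {y} (Finset.singleton_subset_iff.2 hy) (by simp) (by simp) with h | hy0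
  · exact h
  rcases hzero {x, y} hpair Finset.card_le_two (by simp) with h | hxy0
  · exact h
  exact (hf.relT1_false_of_apply_pair_eq_zero h1 hxy hx0 hy0 hxy0).elim

end relT1

end IsPolymorphism

theorem stmt_13_general (n : ℕ) (f : Finset (Fin n) → ℕ) (hf : IsPolymorphism relT1 f)
    (h1 : f ∅ = 1) :
    ∃ X : Finset (Fin n), X.card ≤ 2 ∧ f X = 2 := by
  obtain ⟨X, -, hX⟩ := hf.relT1_exists_subset_card_le_two h1 _ (hf.relT1_apply_univ h1)
  exact ⟨X, hX⟩

theorem stmt_13 (n : ℕ) (hn : 1 ≤ n) (f : Finset (Fin n) → ℕ) (hf : IsPolymorphism relT1 f)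
    (h1 : f ∅ = 1) :
    ∃ X : Finset (Fin n), X.card ≤ 2 ∧ f X = 2 :=
  stmt_13_general n f hf h1
end

section
/- Let f be a polymorphism of (1in3, Č) of arity n with f(∅) = i. Then: (a) f has no (i+2 mod 4)-set, i.e., there is no X ⊆ [n] with f(X) = (i+2) mod 4; (b) f has no two disjoint (i+1 mod 4)-sets, i.e., there are no disjoint X, Y ⊆ [n] with f(X) = f(Y) = (i+1) mod 4. -/
/-- The relation of `Č`: all coordinate permutations of (0,0,1), (1,1,2), (2,2,3), (3,3,0). -/
def relC (a b c : Fin 4) : Prop :=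
  ({a, b, c} : Multiset (Fin 4)) = {0, 0, 1} ∨ ({a, b, c} : Multiset (Fin 4)) = {1, 1, 2} ∨
    ({a, b, c} : Multiset (Fin 4)) = {2, 2, 3} ∨ ({a, b, c} : Multiset (Fin 4)) = {3, 3, 0}

/-
Every triple of `Č` consists of values that are equal or adjacent on the 4-cycle, and a
triple whose first two entries equal `a` has third entry `a + 1`. Applying `f` to the
partition `X, Xᶜ, ∅` shows that `f X` is adjacent or equal to `i = f ∅`, so `f X ≠ i + 2`.
Applying it to `X, Y, (X ∪ Y)ᶜ` for disjoint `i+1`-sets `X, Y` would give an `i+2`-set.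
-/

theorem relC_ne_add_two {a b c : Fin 4} (h : relC a b c) : a ≠ c + 2 := by
  revert a b c; unfold relC; decide

theorem relC_eq_add_one {a c : Fin 4} (h : relC a a c) : c = a + 1 := by
  revert a c; unfold relC; decide

namespace IsPolymorphism

variable {n : ℕ} {B : Type*} {R : B → B → B → Prop} {f : Finset (Fin n) → B}

theorem rel_compl_empty (hf : IsPolymorphism R f) (X : Finset (Fin n)) :
    R (f X) (f Xᶜ) (f ∅) :=
  hf X Xᶜ ∅ disjoint_compl_right (Finset.disjoint_empty_right _)
    (Finset.disjoint_empty_right _) (by simp)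

theorem rel_compl_union (hf : IsPolymorphism R f) {X Y : Finset (Fin n)} (hXY : Disjoint X Y) :
    R (f X) (f Y) (f (X ∪ Y)ᶜ) :=
  hf X Y (X ∪ Y)ᶜ hXY (disjoint_compl_right.mono_left Finset.subset_union_left)
    (disjoint_compl_right.mono_left Finset.subset_union_right) (Finset.union_compl _)

end IsPolymorphism

theorem stmt_14_general (n : ℕ) (f : Finset (Fin n) → Fin 4) (hf : IsPolymorphism relC f)
    (i : Fin 4) (hi : f ∅ = i) :
    (∀ X : Finset (Fin n), f X ≠ i + 2) ∧
      ∀ X Y : Finset (Fin n), Disjoint X Y → ¬(f X = i + 1 ∧ f Y = i + 1) := by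
  have no_opposite (X : Finset (Fin n)) : f X ≠ i + 2 :=
    hi ▸ relC_ne_add_two (hf.rel_compl_empty X)
  refine ⟨no_opposite, ?_⟩
  rintro X Y hXY ⟨hX, hY⟩
  have hrel := hf.rel_compl_union hXY
  rw [hX, hY] at hrel
  exact no_opposite _ (by rw [relC_eq_add_one hrel, add_assoc]; rfl)

theorem stmt_14 (n : ℕ) (hn : 1 ≤ n) (f : Finset (Fin n) → Fin 4) (hf : IsPolymorphism relC f)
    (i : Fin 4) (hi : f ∅ = i) :
    (∀ X : Finset (Fin n), f X ≠ i + 2) ∧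
      ∀ X Y : Finset (Fin n), Disjoint X Y → ¬(f X = i + 1 ∧ f Y = i + 1) :=
  stmt_14_general n f hf i hi
end

section
/- Let f be a polymorphism of (1in3, Č) of arity n and let X, Y ⊆ [n] be disjoint. Then: (a) if f(∅) = f(X) = f(Y) = i, then f(X ∪ Y) = i; (b) if f(∅) = i and f(X) = f(Y) = (i+3) mod 4, then f(X ∪ Y) = (i+1) mod 4. -/
instance relC_dec (a b c : Fin 4) : Decidable (relC a b c) := by
  unfold relC; infer_instance

lemma relC_L1 : ∀ i c : Fin 4, relC i i c → c = i + 1 := by decide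

lemma relC_L2 : ∀ a i : Fin 4, relC a i (i + 1) → a = i := by decide

lemma relC_L3 : ∀ a i : Fin 4, relC a i i → a = i + 1 := by decide

theorem stmt_15 (n : ℕ) (hn : 1 ≤ n) (f : Finset (Fin n) → Fin 4) (hf : IsPolymorphism relC f)
    (X Y : Finset (Fin n)) (hXY : Disjoint X Y) (i : Fin 4) (hi : f ∅ = i) :
    (f X = i → f Y = i → f (X ∪ Y) = i) ∧
      (f X = i + 3 → f Y = i + 3 → f (X ∪ Y) = i + 1) := by
  have hdXZ : Disjoint X (X ∪ Y)ᶜ :=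
    (disjoint_compl_right).mono_left Finset.subset_union_left
  have hdYZ : Disjoint Y (X ∪ Y)ᶜ :=
    (disjoint_compl_right).mono_left Finset.subset_union_right
  have hcov : X ∪ Y ∪ (X ∪ Y)ᶜ = Finset.univ := Finset.union_compl _
  have h1 := hf X Y (X ∪ Y)ᶜ hXY hdXZ hdYZ hcov
  have h2 := hf (X ∪ Y) ∅ (X ∪ Y)ᶜ (Finset.disjoint_empty_right _)
    disjoint_compl_right (Finset.disjoint_empty_left _) (by simpa using hcov)
  rw [hi] at h2
  constructor
  · intro hx hy
    rw [hx, hy] at h1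
    have hz := relC_L1 _ _ h1
    rw [hz] at h2
    exact relC_L2 _ _ h2
  · intro hx hy
    rw [hx, hy] at h1
    have hz := relC_L1 _ _ h1
    have : i + 3 + 1 = i := by
      have : (3 : Fin 4) + 1 = 0 := rfl
      rw [add_assoc, this, add_zero]
    rw [hz, this] at h2
    exact relC_L3 _ _ h2
end

section
/- There is no symmetric polymorphism of (1in3, Č+) of arity 23; that is, there is no polymorphism f of (1in3, Č+) of arity 23 such that f(X) depends only on |X|. -/
/-- The relation of `Č+`: the relation of `Č` together with all rainbow tuples. -/
def relCp (a b c : Fin 4) : Prop :=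
  relC a b c ∨ (a ≠ b ∧ a ≠ c ∧ b ≠ c)

def seg (k : ℕ) : Finset (Fin 23) := Finset.univ.filter (fun i => i.val < k)

lemma seg_card {k : ℕ} (h : k ≤ 23) : (seg k).card = k := by
  have hb : ∀ m ∈ Finset.Ico 0 k, m < 23 := fun m hm => by
    simp only [Finset.mem_Ico] at hm; omega
  have : seg k = (Finset.Ico 0 k).attachFin hb := by
    ext i
    simp [seg, Finset.mem_attachFin, i.isLt]
  rw [this, Finset.card_attachFin, Nat.card_Ico]; omega

instance (a b c : Fin 4) : Decidable (relC a b c) := by unfold relC; infer_instance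
instance (a b c : Fin 4) : Decidable (relCp a b c) := by unfold relCp; infer_instance

lemma pairC (u v : Fin 4) (h : relCp u u v) : v = u + 1 := by
  revert h; revert u v; decide

lemma key (f : Finset (Fin 23) → Fin 4) (hp : IsPolymorphism relCp f)
    (hs : ∀ X Y : Finset (Fin 23), X.card = Y.card → f X = f Y)
    (a b c : ℕ) (habc : a + b + c = 23) :
    relCp (f (seg a)) (f (seg b)) (f (seg c)) := by
  have hX : ∀ m ∈ Finset.Ico 0 a, m < 23 := fun m hm => by
    simp only [Finset.mem_Ico] at hm; omega
  have hY : ∀ m ∈ Finset.Ico a (a + b), m < 23 := fun m hm => by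
    simp only [Finset.mem_Ico] at hm; omega
  have hZ : ∀ m ∈ Finset.Ico (a + b) 23, m < 23 := fun m hm => by
    simp only [Finset.mem_Ico] at hm; omega
  set X := (Finset.Ico 0 a).attachFin hX with hXdef
  set Y := (Finset.Ico a (a + b)).attachFin hY with hYdef
  set Z := (Finset.Ico (a + b) 23).attachFin hZ with hZdef
  have dXY : Disjoint X Y := by
    rw [Finset.disjoint_left]
    intro i hi hi'
    rw [hXdef, Finset.mem_attachFin, Finset.mem_Ico] at hi
    rw [hYdef, Finset.mem_attachFin, Finset.mem_Ico] at hi'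
    omega
  have dXZ : Disjoint X Z := by
    rw [Finset.disjoint_left]
    intro i hi hi'
    rw [hXdef, Finset.mem_attachFin, Finset.mem_Ico] at hi
    rw [hZdef, Finset.mem_attachFin, Finset.mem_Ico] at hi'
    omega
  have dYZ : Disjoint Y Z := by
    rw [Finset.disjoint_left]
    intro i hi hi'
    rw [hYdef, Finset.mem_attachFin, Finset.mem_Ico] at hi
    rw [hZdef, Finset.mem_attachFin, Finset.mem_Ico] at hi'
    omega
  have hu : X ∪ Y ∪ Z = Finset.univ := by
    ext i
    simp only [Finset.mem_union, hXdef, hYdef, hZdef, Finset.mem_attachFin,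
      Finset.mem_Ico, Finset.mem_univ, iff_true]
    have := i.isLt
    omega
  have hrel := hp X Y Z dXY dXZ dYZ hu
  have eX : f X = f (seg a) := hs _ _ (by
    rw [hXdef, Finset.card_attachFin, Nat.card_Ico, seg_card (by omega)]; omega)
  have eY : f Y = f (seg b) := hs _ _ (by
    rw [hYdef, Finset.card_attachFin, Nat.card_Ico, seg_card (by omega)]; omega)
  have eZ : f Z = f (seg c) := hs _ _ (by
    rw [hZdef, Finset.card_attachFin, Nat.card_Ico, seg_card (by omega)]; omega)
  rwa [eX, eY, eZ] at hrel

theorem stmt_18 :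
    ¬ ∃ f : Finset (Fin 23) → Fin 4, IsPolymorphism relCp f ∧
      ∀ X Y : Finset (Fin 23), X.card = Y.card → f X = f Y := by
  rintro ⟨f, hp, hs⟩
  set g : ℕ → Fin 4 := fun k => f (seg k) with hg
  have hpair : ∀ a b c : ℕ, a + b + c = 23 → g a = g b → g c = g a + 1 := by
    intro a b c habc hab
    have h : relCp (g a) (g b) (g c) := key f hp hs a b c habc
    rw [← hab] at h
    exact pairC _ _ h
  have h7 : g 7 = g 8 + 1 := hpair 8 8 7 (by norm_num) rfl
  have h9 : g 9 = g 8 + 1 + 1 := by rw [hpair 7 7 9 (by norm_num) rfl, h7]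
  have h5 : g 5 = g 8 + 1 + 1 + 1 := by rw [hpair 9 9 5 (by norm_num) rfl, h9]
  have h13 : g 13 = g 8 := by
    rw [hpair 5 5 13 (by norm_num) rfl, h5]
    have : ∀ x : Fin 4, x + 1 + 1 + 1 + 1 = x := by decide
    exact this _
  have h2 : g 2 = g 8 + 1 := by
    rw [hpair 13 8 2 (by norm_num) h13, h13]
  have h14 : g 14 = g 8 + 1 + 1 := by
    rw [hpair 2 7 14 (by norm_num) (by rw [h2, h7]), h2]
  have h0 : g 0 = g 8 + 1 + 1 + 1 := by
    rw [hpair 14 9 0 (by norm_num) (by rw [h14, h9]), h14]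
  have h18 : g 18 = g 8 := by
    rw [hpair 0 5 18 (by norm_num) (by rw [h0, h5]), h0]
    have : ∀ x : Fin 4, x + 1 + 1 + 1 + 1 = x := by decide
    exact this _
  have hcase : ∀ u v : Fin 4, u = v ∨ u = v + 1 ∨ u = v + 1 + 1 ∨ u = v + 1 + 1 + 1 := by decide
  have hcancel : ∀ u v : Fin 4, u + 1 = v + 1 → u = v := by decide
  rcases hcase (g 6) (g 8) with h6 | h6 | h6 | h6
  · -- g6 = g8 : triple (6,8,9)
    have := hpair 6 8 9 (by norm_num) h6
    rw [h9, h6] at this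
    have hne : ∀ x : Fin 4, x + 1 + 1 ≠ x + 1 := by decide
    exact hne _ this
  · -- g6 = g8+1 = g2
    have h15 : g 15 = g 8 + 1 + 1 := by
      rw [hpair 6 2 15 (by norm_num) (by rw [h6, h2]), h6]
    have h4 : g 4 = g 8 + 1 := by
      have := hpair 4 4 15 (by norm_num) rfl
      rw [h15] at this
      exact hcancel _ _ this.symm
    have h17 : g 17 = g 8 + 1 + 1 := by
      rw [hpair 4 2 17 (by norm_num) (by rw [h4, h2]), h4]
    have h3 : g 3 = g 8 + 1 := by
      have := hpair 3 3 17 (by norm_num) rfl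
      rw [h17] at this
      exact hcancel _ _ this.symm
    have h18' : g 18 = g 8 + 1 + 1 := by
      rw [hpair 3 2 18 (by norm_num) (by rw [h3, h2]), h3]
    rw [h18] at h18'
    have hne : ∀ x : Fin 4, x = x + 1 + 1 → False := by decide
    exact hne _ h18'
  · -- g6 = g8+2 = g9 : triple (6,9,8)
    have := hpair 6 9 8 (by norm_num) (by rw [h6, h9])
    rw [h6] at this
    have hne : ∀ x : Fin 4, x = x + 1 + 1 + 1 → False := by decide
    exact hne _ this
  · -- g6 = g8+3 = g0 : triple (3,6,14) after (6,0,17)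
    have h17 : g 17 = g 8 := by
      rw [hpair 6 0 17 (by norm_num) (by rw [h6, h0]), h6]
      have : ∀ x : Fin 4, x + 1 + 1 + 1 + 1 = x := by decide
      exact this _
    have h3 : g 3 = g 8 + 1 + 1 + 1 := by
      have := hpair 3 3 17 (by norm_num) rfl
      rw [h17] at this
      have : g 3 + 1 = g 8 + 1 + 1 + 1 + 1 := by
        rw [← this]
        have h4 : ∀ x : Fin 4, x = x + 1 + 1 + 1 + 1 := by decide
        exact (h4 _) ▸ rfl
      exact hcancel _ _ this
    have h14' : g 14 = g 8 := by
      rw [hpair 3 6 14 (by norm_num) (by rw [h3, h6]), h3]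
      have : ∀ x : Fin 4, x + 1 + 1 + 1 + 1 = x := by decide
      exact this _
    rw [h14] at h14'
    have hne : ∀ x : Fin 4, x + 1 + 1 = x → False := by decide
    exact hne _ h14'
end

section
/- There is no block-symmetric polymorphism of (1in3, Č+) of arity 47 with two blocks of sizes 23 and 24. -/
/-!
Take 8 elements of the 24-block in each of the three parts of a partition of `[47]`. A
two-block-symmetric polymorphism then restricts to `h : ℕ → Fin 4` with `relCp (h a) (h b) (h c)`
whenever `a + b + c = 23`, a symmetric polymorphism of arity 23. In `Č+` a repeated value `x, x`
forces the third value to be `x + 1`, so the triples `(7,8,8), (7,7,9), (5,9,9), (5,5,13), (2,8,13)`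
express `h` at `2, 5, 7, 9, 13` through `h 8`, after which the triples
`(2,9,12), (3,7,13), (3,8,12), (5,6,12), (6,8,9)` leave no values for `h 3, h 6, h 12`.
-/

def IsTwoBlockSymmetric {n : ℕ} {B : Type*} (g : Finset (Fin n) → B) (U V : Finset (Fin n)) :
    Prop :=
  ∀ X Y : Finset (Fin n), (X ∩ U).card = (Y ∩ U).card → (X ∩ V).card = (Y ∩ V).card → g X = g Y

namespace Finset

variable {α : Type*} [DecidableEq α]

theorem exists_partition_three (s : Finset α) {a b c : ℕ} (h : a + b + c = s.card) :
    ∃ P Q R : Finset α, Disjoint P Q ∧ Disjoint P R ∧ Disjoint Q R ∧ P ∪ Q ∪ R = s ∧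
      P.card = a ∧ Q.card = b ∧ R.card = c := by
  obtain ⟨P, hPs, hP⟩ := s.exists_subset_card_eq (n := a) (by omega)
  obtain ⟨Q, hQs, hQ⟩ := (s \ P).exists_subset_card_eq (n := b)
    (by rw [card_sdiff_of_subset hPs]; omega)
  have hPQ : Disjoint P Q := disjoint_of_subset_right hQs disjoint_sdiff
  have hPQs : P ∪ Q ⊆ s := union_subset hPs (hQs.trans sdiff_subset)
  refine ⟨P, Q, s \ (P ∪ Q), hPQ, disjoint_of_subset_left subset_union_left disjoint_sdiff,
    disjoint_of_subset_left subset_union_right disjoint_sdiff, union_sdiff_of_subset hPQs,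
    hP, hQ, ?_⟩
  rw [card_sdiff_of_subset hPQs, card_union_of_disjoint hPQ]
  omega

theorem union_inter_left_of_subset {P Q U V : Finset α} (hUV : Disjoint U V) (hP : P ⊆ U)
    (hQ : Q ⊆ V) : (P ∪ Q) ∩ U = P := by
  rw [union_inter_distrib_right, inter_eq_left.mpr hP,
    disjoint_iff_inter_eq_empty.mp (disjoint_of_subset_left hQ hUV.symm), union_empty]

theorem disjoint_union_union_of_subset {P P' Q Q' U V : Finset α} (hUV : Disjoint U V)
    (hP : P ⊆ U) (hP' : P' ⊆ U) (hQ : Q ⊆ V) (hQ' : Q' ⊆ V) (hPP' : Disjoint P P')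
    (hQQ' : Disjoint Q Q') : Disjoint (P ∪ Q) (P' ∪ Q') := by
  have hUV' : ∀ {X Y}, X ⊆ U → Y ⊆ V → Disjoint X Y := fun hX hY =>
    disjoint_of_subset_left hX (disjoint_of_subset_right hY hUV)
  rw [disjoint_union_left, disjoint_union_right, disjoint_union_right]
  exact ⟨⟨hPP', hUV' hP hQ'⟩, (hUV' hP' hQ).symm, hQQ'⟩

end Finset

open Finset

section TwoBlocks

variable {n : ℕ} {U V : Finset (Fin n)}

theorem exists_card_inter_eq (hUV : Disjoint U V) {a b : ℕ} (ha : a ≤ U.card)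
    (hb : b ≤ V.card) : ∃ S : Finset (Fin n), (S ∩ U).card = a ∧ (S ∩ V).card = b := by
  obtain ⟨P, hPU, rfl⟩ := U.exists_subset_card_eq ha
  obtain ⟨Q, hQV, rfl⟩ := V.exists_subset_card_eq hb
  refine ⟨P ∪ Q, by rw [union_inter_left_of_subset hUV hPU hQV], ?_⟩
  rw [union_comm, union_inter_left_of_subset hUV.symm hQV hPU]

/-- The sets `Sᵢ` need not partition `[n]`: by symmetry they can be replaced by a partition with
the same counts in each block. -/
theorem IsPolymorphism.rel_of_card_inter {B : Type*} {R : B → B → B → Prop}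
    {g : Finset (Fin n) → B} (hg : IsPolymorphism R g) (hUV : Disjoint U V)
    (hcover : U ∪ V = univ) (hsym : IsTwoBlockSymmetric g U V) (S₁ S₂ S₃ : Finset (Fin n))
    (hU : (S₁ ∩ U).card + (S₂ ∩ U).card + (S₃ ∩ U).card = U.card)
    (hV : (S₁ ∩ V).card + (S₂ ∩ V).card + (S₃ ∩ V).card = V.card) :
    R (g S₁) (g S₂) (g S₃) := by
  obtain ⟨P₁, P₂, P₃, hP₁₂, hP₁₃, hP₂₃, hPU, hP₁, hP₂, hP₃⟩ := U.exists_partition_three hU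
  obtain ⟨Q₁, Q₂, Q₃, hQ₁₂, hQ₁₃, hQ₂₃, hQV, hQ₁, hQ₂, hQ₃⟩ := V.exists_partition_three hV
  have hP₁U : P₁ ⊆ U := hPU ▸ subset_union_left.trans subset_union_left
  have hP₂U : P₂ ⊆ U := hPU ▸ subset_union_right.trans subset_union_left
  have hP₃U : P₃ ⊆ U := hPU ▸ subset_union_right
  have hQ₁V : Q₁ ⊆ V := hQV ▸ subset_union_left.trans subset_union_left
  have hQ₂V : Q₂ ⊆ V := hQV ▸ subset_union_right.trans subset_union_left
  have hQ₃V : Q₃ ⊆ V := hQV ▸ subset_union_right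
  have hgS : ∀ {P Q S}, P ⊆ U → Q ⊆ V → (S ∩ U).card = P.card → (S ∩ V).card = Q.card →
      g S = g (P ∪ Q) := fun hP hQ hSP hSQ => hsym _ _
    (by rw [union_inter_left_of_subset hUV hP hQ, hSP])
    (by rw [union_comm, union_inter_left_of_subset hUV.symm hQ hP, hSQ])
  rw [hgS hP₁U hQ₁V hP₁.symm hQ₁.symm, hgS hP₂U hQ₂V hP₂.symm hQ₂.symm,
    hgS hP₃U hQ₃V hP₃.symm hQ₃.symm]
  refine hg _ _ _ (disjoint_union_union_of_subset hUV hP₁U hP₂U hQ₁V hQ₂V hP₁₂ hQ₁₂)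
    (disjoint_union_union_of_subset hUV hP₁U hP₃U hQ₁V hQ₃V hP₁₃ hQ₁₃)
    (disjoint_union_union_of_subset hUV hP₂U hP₃U hQ₂V hQ₃V hP₂₃ hQ₂₃) ?_
  rw [← hcover, ← hPU, ← hQV]
  ext x; simp only [mem_union]; tauto

/-- Every argument of `h` is given the count `k` in the block `V`. -/
theorem IsPolymorphism.exists_symmetric_of_isTwoBlockSymmetric {B : Type*}
    {R : B → B → B → Prop} {g : Finset (Fin n) → B} (hg : IsPolymorphism R g)
    (hUV : Disjoint U V) (hcover : U ∪ V = univ) (hsym : IsTwoBlockSymmetric g U V) {k : ℕ}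
    (hV : V.card = 3 * k) :
    ∃ h : ℕ → B, ∀ a b c, a + b + c = U.card → R (h a) (h b) (h c) := by
  have hS : ∀ a, ∃ S : Finset (Fin n), a ≤ U.card → (S ∩ U).card = a ∧ (S ∩ V).card = k :=
    fun a => if ha : a ≤ U.card then
      (exists_card_inter_eq hUV ha (by omega)).imp fun _ hS _ => hS
    else ⟨∅, fun ha' => absurd ha' ha⟩
  choose S hS using hS
  refine ⟨fun a => g (S a), fun a b c habc => hg.rel_of_card_inter hUV hcover hsym _ _ _ ?_ ?_⟩
  · rw [(hS a (by omega)).1, (hS b (by omega)).1, (hS c (by omega)).1, habc]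
  · rw [(hS a (by omega)).2, (hS b (by omega)).2, (hS c (by omega)).2, hV]
    ring

end TwoBlocks

instance inst_s19 (a b c : Fin 4) : Decidable (relCp a b c) := by unfold relCp relC; infer_instance

theorem relCp_self_left : ∀ {x z : Fin 4}, relCp x x z → z = x + 1 := by decide

theorem relCp_self_right : ∀ {x y : Fin 4}, relCp x y y → x = y + 1 := by decide

theorem not_relCp_of_forced : ∀ t x y z : Fin 4, relCp (t + 1) (t + 2) z →
    relCp x (t + 1) t → relCp x t z → relCp (t + 3) y z → relCp y t (t + 2) → False := by
  decide

theorem not_symmetric_relCp_23 (h : ℕ → Fin 4) :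
    ¬ ∀ a b c, a + b + c = 23 → relCp (h a) (h b) (h c) := by
  intro H
  have h7 : h 7 = h 8 + 1 := relCp_self_right (H 7 8 8 rfl)
  have h9 : h 9 = h 8 + 2 := by rw [relCp_self_left (H 7 7 9 rfl), h7]; omega
  have h5 : h 5 = h 8 + 3 := by rw [relCp_self_right (H 5 9 9 rfl), h9]; omega
  have h13 : h 13 = h 8 := by rw [relCp_self_left (H 5 5 13 rfl), h5]; omega
  have h2 : h 2 = h 8 + 1 := relCp_self_right (by simpa only [h13] using H 2 8 13 rfl)
  refine not_relCp_of_forced (h 8) (h 3) (h 6) (h 12) ?_ ?_ (H 3 8 12 rfl) ?_ ?_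
  · simpa only [h2, h9] using H 2 9 12 rfl
  · simpa only [h7, h13] using H 3 7 13 rfl
  · simpa only [h5] using H 5 6 12 rfl
  · simpa only [h9] using H 6 8 9 rfl

theorem stmt_19 :
    ¬ ∃ g : Finset (Fin 47) → Fin 4, IsPolymorphism relCp g ∧
      ∃ X23 X24 : Finset (Fin 47), Disjoint X23 X24 ∧ X23 ∪ X24 = Finset.univ ∧
        X23.card = 23 ∧ X24.card = 24 ∧
        ∀ X Y : Finset (Fin 47), (X ∩ X23).card = (Y ∩ X23).card →
          (X ∩ X24).card = (Y ∩ X24).card → g X = g Y := by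
  rintro ⟨g, hg, X23, X24, hdisj, hcover, h23, h24, hsym⟩
  obtain ⟨h, hh⟩ := hg.exists_symmetric_of_isTwoBlockSymmetric hdisj hcover hsym
    (k := 8) h24
  exact not_symmetric_relCp_23 h (h23 ▸ hh)
end
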